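/- Let 0 ≤ m_r ≤ d_r, 0 ≤ m_f ≤ d_f be reals with d_r ≥ d_f − m_f and d_f ≥ d_r − m_r, and let δ_r ≥ 0, δ_f ≥ 0. The following are equivalent: (i) for every signal u, Sol_BDC^{m_r,d_r,m_f,d_f}(u) ∩ Sol_AIC^{δ_r,δ_f} ≠ ∅; (ii) δ_r + δ_f ≤ m_r + m_f. -/
import Mathlib


open Set

/-- A signal: a `Bool`-valued function of real time which is constant before
some `t 0` and constant on each interval `[t k, t (k+1))`, where `t` is a
strictly increasing sequence tending to `+∞`. -/
def IsSignal (x : ℝ → Bool) : Prop :=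
  ∃ t : ℕ → ℝ, StrictMono t ∧ Filter.Tendsto t Filter.atTop Filter.atTop ∧
    (∀ a ∈ Set.Iio (t 0), ∀ b ∈ Set.Iio (t 0), x a = x b) ∧
    (∀ k : ℕ, ∀ s ∈ Set.Ico (t k) (t (k + 1)), x s = x (t k))

-- The infimum (logical AND) of `u` over a set `A` (true on the empty set).
open Classical in
noncomputable def infOn (u : ℝ → Bool) (A : Set ℝ) : Bool :=
  decide (∀ ξ ∈ A, u ξ = true)

-- The supremum (logical OR) of `u` over a set `A` (false on the empty set).
open Classical in
noncomputable def supOn (u : ℝ → Bool) (A : Set ℝ) : Bool :=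
  decide (∃ ξ ∈ A, u ξ = true)

-- The left limit `x(t-0)`: the constant value of `x` on `(t-ε, t)` for small `ε > 0`.
open Classical in
noncomputable def leftVal (x : ℝ → Bool) (t : ℝ) : Bool :=
  decide (∃ ε > 0, ∀ s ∈ Set.Ioo (t - ε) t, x s = true)

/-- The bounded delay condition. -/
noncomputable def SolBDC (mr dr mf df : ℝ) (u : ℝ → Bool) : Set (ℝ → Bool) :=
  {x | IsSignal x ∧ ∀ t : ℝ,
    infOn u (Set.Icc (t - dr) (t - dr + mr)) ≤ x t ∧
    x t ≤ supOn u (Set.Icc (t - df) (t - df + mf))}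

/-- The absolute inertial condition. -/
noncomputable def SolAIC (δr δf : ℝ) : Set (ℝ → Bool) :=
  {x | IsSignal x ∧ ∀ t : ℝ,
    (!leftVal x t && x t) ≤ infOn x (Set.Icc t (t + δr)) ∧
    (leftVal x t && !x t) ≤ infOn (fun ξ => !x ξ) (Set.Icc t (t + δf))}

/-- The relative inertial condition. -/
noncomputable def SolRIC (μr δr μf δf : ℝ) (u : ℝ → Bool) : Set (ℝ → Bool) :=
  {x | IsSignal x ∧ ∀ t : ℝ,
    (!leftVal x t && x t) ≤ infOn u (Set.Icc (t - δr) (t - δr + μr)) ∧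
    (leftVal x t && !x t) ≤ infOn (fun ξ => !u ξ) (Set.Icc (t - δf) (t - δf + μf))}


open Filter

/-- `x` only changes at points of `D`. -/
def PC (x : ℝ → Bool) (D : Set ℝ) : Prop :=
  ∀ a b : ℝ, a ≤ b → (∀ p ∈ D, ¬(a < p ∧ p ≤ b)) → x a = x b

/-- Locally finite (to the left). -/
def LF (D : Set ℝ) : Prop := ∀ M : ℝ, (D ∩ Iic M).Finite

lemma PC_mono {x : ℝ → Bool} {D E : Set ℝ} (hDE : D ⊆ E) (h : PC x D) : PC x E := by
  intro a b hab hp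
  exact h a b hab (fun p hpD => hp p (hDE hpD))

lemma PC_const {x : ℝ → Bool} {D : Set ℝ} (h : PC x D) {a b c d : ℝ}
    (hca : c ≤ a) (hab : a ≤ b) (hbd : b ≤ d) (hp : ∀ p ∈ D, ¬(c < p ∧ p ≤ d)) :
    x a = x b := by
  refine h a b hab (fun p hpD hq => hp p hpD ⟨lt_of_le_of_lt hca hq.1, hq.2.trans hbd⟩)

lemma LF_union {D E : Set ℝ} (hD : LF D) (hE : LF E) : LF (D ∪ E) := by
  intro M
  have : (D ∪ E) ∩ Iic M = (D ∩ Iic M) ∪ (E ∩ Iic M) := by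
    ext p; simp [Set.mem_inter_iff, Set.mem_union]; tauto
  rw [this]; exact (hD M).union (hE M)

lemma LF_image_add {D : Set ℝ} (hD : LF D) (c : ℝ) : LF ((fun p => p + c) '' D) := by
  intro M
  have hsub : ((fun p => p + c) '' D) ∩ Iic M ⊆ (fun p => p + c) '' (D ∩ Iic (M - c)) := by
    rintro q ⟨⟨p, hpD, rfl⟩, hq⟩
    exact ⟨p, ⟨hpD, by simpa [le_sub_iff_add_le] using hq⟩, rfl⟩
  exact Set.Finite.subset ((hD (M - c)).image _) hsub

lemma LF_range {s : ℕ → ℝ} (hs : StrictMono s) (ht : Tendsto s atTop atTop) :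
    LF (Set.range s) := by
  intro M
  obtain ⟨N, hN⟩ := Filter.eventually_atTop.mp (ht.eventually_gt_atTop M)
  have hsub : Set.range s ∩ Iic M ⊆ s '' (Set.Iio N) := by
    rintro q ⟨⟨n, rfl⟩, hq⟩
    refine ⟨n, ?_, rfl⟩
    by_contra h
    exact absurd (hN n (not_lt.mp h)) (not_lt.mpr hq)
  exact Set.Finite.subset ((Set.finite_Iio N).image s) hsub

lemma LF_nat : LF ((fun n : ℕ => (n : ℝ)) '' Set.univ) := by
  have : StrictMono (fun n : ℕ => (n : ℝ)) := fun a b h => Nat.cast_lt.mpr h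
  have ht : Tendsto (fun n : ℕ => (n : ℝ)) atTop atTop := tendsto_natCast_atTop_atTop
  have := LF_range this ht
  simpa [Set.image_univ] using this

lemma exists_isLeast {A : Set ℝ} (hub : ∀ M : ℝ, ∃ a ∈ A, M < a) (hLF : LF A) (c : ℝ) :
    ∃ d, IsLeast (A ∩ Ioi c) d := by
  obtain ⟨a0, ha0A, ha0c⟩ := hub c
  have hBfin : (A ∩ Ioi c ∩ Iic a0).Finite :=
    Set.Finite.subset (hLF a0) (by intro q hq; exact ⟨hq.1.1, hq.2⟩)
  have hBne : (A ∩ Ioi c ∩ Iic a0).Nonempty := ⟨a0, ⟨⟨ha0A, ha0c⟩, Set.mem_Iic.mpr (le_refl _)⟩⟩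
  obtain ⟨b, hbB, hbmin⟩ := Set.exists_min_image _ id hBfin hBne
  refine ⟨b, hbB.1, ?_⟩
  intro e heE
  by_cases he : e ≤ a0
  · exact hbmin e ⟨heE, he⟩
  · exact le_trans hbB.2 (le_of_not_ge he)

open Classical in
/-- Enumerate an unbounded locally finite nonempty set by an increasing sequence. -/
lemma exists_enum {A : Set ℝ} (hLF : LF A) (hub : ∀ M : ℝ, ∃ a ∈ A, M < a)
    (hne : A.Nonempty) :
    ∃ s : ℕ → ℝ, StrictMono s ∧ Tendsto s atTop atTop ∧ A ⊆ Set.range s := by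
  classical
  -- least element of A
  obtain ⟨a0, ha0⟩ := hne
  have hB0fin : (A ∩ Iic a0).Finite := hLF a0
  have hB0ne : (A ∩ Iic a0).Nonempty := ⟨a0, ⟨ha0, Set.mem_Iic.mpr (le_refl _)⟩⟩
  obtain ⟨l0, hl0B, hl0min⟩ := Set.exists_min_image _ id hB0fin hB0ne
  have hl0least : ∀ e ∈ A, l0 ≤ e := by
    intro e he
    by_cases h : e ≤ a0
    · exact hl0min e ⟨he, h⟩
    · exact le_trans hl0B.2 (le_of_not_ge h)
  have hnext : ∀ c : ℝ, ∃ d, IsLeast (A ∩ Ioi c) d := exists_isLeast hub hLF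
  obtain ⟨s, hs0, hssucc⟩ : ∃ s : ℕ → ℝ, s 0 = l0 ∧ ∀ n, IsLeast (A ∩ Ioi (s n)) (s (n + 1)) :=
    ⟨fun n => Nat.rec l0 (fun _ c => (hnext c).choose) n, rfl, fun n => (hnext _).choose_spec⟩
  have hsA : ∀ n, s n ∈ A := by
    intro n; cases n with
    | zero => rw [hs0]; exact hl0B.1
    | succ m => exact (hssucc m).1.1
  have hmono : StrictMono s := strictMono_nat_of_lt_succ (fun n => (hssucc n).1.2)
  have hunb : ∀ M : ℝ, ∃ n, M ≤ s n := by
    intro M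
    by_contra h
    push_neg at h
    have hsub : Set.range s ⊆ A ∩ Iic M := by
      rintro q ⟨n, rfl⟩; exact ⟨hsA n, le_of_lt (h n)⟩
    exact (Set.infinite_range_of_injective hmono.injective) (Set.Finite.subset (hLF M) hsub)
  have htend : Tendsto s atTop atTop := Filter.tendsto_atTop_atTop_of_monotone hmono.monotone hunb
  refine ⟨s, hmono, htend, ?_⟩
  intro e heA
  rcases eq_or_lt_of_le (hl0least e heA) with h | h
  · exact ⟨0, by rw [hs0, h]⟩
  -- greatest n with s n < e
  have hEx : ∃ n, e ≤ s n := by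
    obtain ⟨n, hn⟩ := (htend.eventually_gt_atTop e).exists
    exact ⟨n, le_of_lt hn⟩
  haveI : DecidablePred (fun n => e ≤ s n) := fun n => Classical.propDecidable _
  obtain ⟨N, hNspec, hNmin⟩ : ∃ N, e ≤ s N ∧ ∀ m, m < N → ¬ e ≤ s m :=
    ⟨Nat.find hEx, Nat.find_spec hEx, fun m hm => Nat.find_min hEx hm⟩
  have hNpos : N ≠ 0 := by
    intro h0
    have := hNspec
    rw [h0] at this
    rw [hs0] at this
    exact absurd h (not_lt.mpr this)
  obtain ⟨K, hKN⟩ : ∃ K, N = K + 1 := ⟨N - 1, (Nat.succ_pred_eq_of_ne_zero hNpos).symm⟩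
  have hPK : s K < e := not_le.mp (hNmin K (by omega))
  have hle : s (K + 1) ≤ e := (hssucc K).2 ⟨heA, hPK⟩
  have hge : e ≤ s (K + 1) := by rw [← hKN]; exact hNspec
  exact ⟨K + 1, le_antisymm hle hge⟩

lemma isSignal_of_PC_LF {x : ℝ → Bool} {D : Set ℝ} (hPC : PC x D) (hLF : LF D) :
    IsSignal x := by
  set A := D ∪ ((fun n : ℕ => (n : ℝ)) '' Set.univ) with hA
  have hALF : LF A := LF_union hLF LF_nat
  have hub : ∀ M : ℝ, ∃ a ∈ A, M < a := by
    intro M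
    obtain ⟨n, hn⟩ := exists_nat_gt M
    exact ⟨(n : ℝ), Or.inr ⟨n, trivial, rfl⟩, hn⟩
  have hne : A.Nonempty := ⟨(0 : ℝ), Or.inr ⟨0, trivial, by norm_num⟩⟩
  obtain ⟨s, hmono, htend, hsub⟩ := exists_enum hALF hub hne
  have hPCs : PC x (Set.range s) := PC_mono (fun p hp => hsub (Or.inl hp)) hPC
  have hkey : ∀ c : ℝ, c < s 0 → ∀ p ∈ Set.range s, ¬(p ≤ c) := by
    rintro c hc p ⟨k, rfl⟩ h2
    exact absurd (lt_of_le_of_lt h2 hc) (not_lt.mpr (hmono.monotone (Nat.zero_le k)))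
  refine ⟨s, hmono, htend, ?_, ?_⟩
  · intro a ha b hb
    rcases le_total a b with h | h
    · exact hPCs a b h (fun p hp hq => hkey b hb p hp hq.2)
    · exact (hPCs b a h (fun p hp hq => hkey a ha p hp hq.2)).symm
  · intro k t ht
    refine (hPCs (s k) t ht.1 ?_).symm
    rintro p ⟨j, rfl⟩ ⟨h1, h2⟩
    have hjk : k < j := hmono.lt_iff_lt.mp h1
    have : s (k + 1) ≤ s j := hmono.monotone hjk
    exact absurd (lt_of_le_of_lt (this.trans h2) ht.2) (lt_irrefl _)

lemma PC_of_isSignal {x : ℝ → Bool} (hx : IsSignal x) :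
    ∃ D : Set ℝ, PC x D ∧ LF D := by
  classical
  obtain ⟨t, hmono, htend, hiio, hico⟩ := hx
  refine ⟨Set.range t, ?_, LF_range hmono htend⟩
  intro a b hab hp
  by_cases hb : b < t 0
  · exact hiio a (lt_of_le_of_lt hab hb) b hb
  · push_neg at hb
    have hEx : ∃ n, b < t n := (htend.eventually_gt_atTop b).exists
    set N := Nat.find hEx with hN
    have hNpos : N ≠ 0 := by
      intro h0
      have := Nat.find_spec hEx
      rw [← hN, h0] at this
      exact absurd this (not_lt.mpr hb)
    obtain ⟨K, hKN⟩ : ∃ K, N = K + 1 := ⟨N - 1, (Nat.succ_pred_eq_of_ne_zero hNpos).symm⟩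
    have htKb : t K ≤ b := by
      have := Nat.find_min hEx (m := K) (by omega)
      exact not_lt.mp this
    have hbtK1 : b < t (K + 1) := by
      have := Nat.find_spec hEx
      rwa [← hN, hKN] at this
    have htKa : t K ≤ a := by
      by_contra h
      exact hp (t K) ⟨K, rfl⟩ ⟨not_le.mp h, htKb⟩
    have ha' : a ∈ Set.Ico (t K) (t (K + 1)) := ⟨htKa, lt_of_le_of_lt hab hbtK1⟩
    have hb' : b ∈ Set.Ico (t K) (t (K + 1)) := ⟨htKb, hbtK1⟩
    rw [hico K a ha', hico K b hb']

lemma infOn_eq_true {u : ℝ → Bool} {A : Set ℝ} : infOn u A = true ↔ ∀ ξ ∈ A, u ξ = true := by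
  simp [infOn]

lemma supOn_eq_true {u : ℝ → Bool} {A : Set ℝ} : supOn u A = true ↔ ∃ ξ ∈ A, u ξ = true := by
  simp [supOn]

lemma bool_le_iff {a b : Bool} : a ≤ b ↔ (a = true → b = true) := by
  cases a <;> cases b <;> simp

lemma bool_eq_of_ne {a : Bool} {v : Bool} (h : ¬ a = v) : a = !v := by
  cases a <;> cases v <;> simp_all

/-- The sliding-window sup only changes at shifted change points. -/
lemma PC_sup_window {u : ℝ → Bool} {D : Set ℝ} (hu : PC u D) (d m : ℝ) (hm : 0 ≤ m) :
    PC (fun s => supOn u (Icc (s - d) (s - d + m)))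
      (((fun p => p + d) '' D) ∪ ((fun p => p + (d - m)) '' D)) := by
  intro a b hab hp
  have hp1 : ∀ p ∈ D, ¬(a < p + d ∧ p + d ≤ b) := fun p hpD h =>
    hp (p + d) (Or.inl ⟨p, hpD, rfl⟩) h
  have hp2 : ∀ p ∈ D, ¬(a < p + (d - m) ∧ p + (d - m) ≤ b) := fun p hpD h =>
    hp (p + (d - m)) (Or.inr ⟨p, hpD, rfl⟩) h
  simp only [supOn]
  rw [decide_eq_decide]
  constructor
  · rintro ⟨ξ, hξ, hξt⟩
    by_cases hc : b - d ≤ ξ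
    · exact ⟨ξ, ⟨hc, hξ.2.trans (by linarith)⟩, hξt⟩
    · push_neg at hc
      refine ⟨b - d, ⟨le_refl _, by linarith⟩, ?_⟩
      rw [← hξt]
      refine (hu ξ (b - d) (le_of_lt hc) ?_).symm
      intro p hpD ⟨h1, h2⟩
      exact hp1 p hpD ⟨by linarith [hξ.1], by linarith⟩
  · rintro ⟨ξ, hξ, hξt⟩
    by_cases hc : ξ ≤ a - d + m
    · exact ⟨ξ, ⟨le_trans (by linarith) hξ.1, hc⟩, hξt⟩
    · push_neg at hc
      refine ⟨a - d + m, ⟨by linarith, le_refl _⟩, ?_⟩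
      rw [← hξt]
      refine (hu (a - d + m) ξ (le_of_lt hc) ?_)
      intro p hpD ⟨h1, h2⟩
      exact hp2 p hpD ⟨by linarith, by linarith [hξ.2]⟩

/-- The sliding-window inf (to the right) only changes at shifted change points. -/
lemma PC_inf_window {U : ℝ → Bool} {E : Set ℝ} (hU : PC U E) (δ : ℝ) (hδ : 0 ≤ δ) :
    PC (fun t => infOn U (Icc t (t + δ))) (E ∪ ((fun p => p + (-δ)) '' E)) := by
  intro a b hab hp
  have hp1 : ∀ p ∈ E, ¬(a < p ∧ p ≤ b) := fun p hpE h => hp p (Or.inl hpE) h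
  have hp2 : ∀ p ∈ E, ¬(a < p - δ ∧ p - δ ≤ b) := fun p hpE h =>
    hp (p - δ) (Or.inr ⟨p, hpE, by ring⟩) h
  simp only [infOn]
  rw [decide_eq_decide]
  constructor
  · intro h s hs
    by_cases hc : s ≤ a + δ
    · exact h s ⟨le_trans hab hs.1, hc⟩
    · push_neg at hc
      rw [← h (a + δ) ⟨by linarith, le_refl _⟩]
      refine (hU (a + δ) s (le_of_lt hc) ?_).symm
      intro p hpE ⟨h1, h2⟩
      exact hp2 p hpE ⟨by linarith, by linarith [hs.2]⟩
  · intro h s hs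
    by_cases hc : b ≤ s
    · exact h s ⟨hc, hs.2.trans (by linarith)⟩
    · push_neg at hc
      rw [← h b ⟨le_refl _, by linarith⟩]
      refine hU s b (le_of_lt hc) ?_
      intro p hpE ⟨h1, h2⟩
      exact hp1 p hpE ⟨by linarith [hs.1], h2⟩

open Classical in
/-- The "keep runs of length δr starting from their left end" operator
preserves the change-point set. -/
lemma PC_run {y : ℝ → Bool} {E : Set ℝ} (hy : PC y E) (δr : ℝ) :
    PC (fun t => decide (∃ a, a ≤ t ∧ ∀ s ∈ Icc a (max t (a + δr)), y s = true)) E := by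
  intro a b hab hp
  have yconst : ∀ s s' : ℝ, a ≤ s → s ≤ s' → s' ≤ b → y s = y s' := by
    intro s s' h1 h2 h3
    refine hy s s' h2 ?_
    intro p hpE ⟨q1, q2⟩
    exact hp p hpE ⟨lt_of_le_of_lt h1 q1, q2.trans h3⟩
  rw [decide_eq_decide]
  constructor
  · rintro ⟨w, hwa, hw⟩
    -- y is true at a, hence on [a,b]
    have hya : y a = true := hw a ⟨hwa, le_max_left _ _⟩
    have hyab : ∀ s, a ≤ s → s ≤ b → y s = true := by
      intro s h1 h2
      rw [← yconst a s (le_refl a) h1 h2]; exact hya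
    refine ⟨w, hwa.trans hab, ?_⟩
    intro s hs
    by_cases hc : s ≤ max a (w + δr)
    · exact hw s ⟨hs.1, hc⟩
    · push_neg at hc
      have hsa : a < s := lt_of_le_of_lt (le_max_left _ _) hc
      have hsb : s ≤ b := by
        rcases max_cases b (w + δr) with ⟨he, _⟩ | ⟨he, hle⟩
        · rw [he] at hs; exact hs.2
        · exact absurd (hs.2.trans he.le) (not_le.mpr (lt_of_le_of_lt (le_max_right a _) hc))
      exact hyab s (le_of_lt hsa) hsb
  · rintro ⟨w, hwb, hw⟩
    by_cases hwa : w ≤ a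
    · refine ⟨w, hwa, ?_⟩
      intro s hs
      refine hw s ⟨hs.1, hs.2.trans ?_⟩
      exact max_le_max hab (le_refl _)
    · push_neg at hwa
      have hyw : y w = true := hw w ⟨le_refl _, le_trans hwb (le_max_left _ _)⟩
      have hyab : ∀ s, a ≤ s → s ≤ b → y s = true := by
        intro s h1 h2
        by_cases hc : s ≤ w
        · rw [yconst s w h1 hc hwb]; exact hyw
        · push_neg at hc
          exact hw s ⟨le_of_lt hc, le_trans h2 (le_max_left _ _)⟩
      refine ⟨a, le_refl a, ?_⟩
      intro s hs
      by_cases hc : s ≤ b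
      · exact hyab s hs.1 hc
      · push_neg at hc
        refine hw s ⟨le_of_lt (lt_of_le_of_lt hwb hc), ?_⟩
        have : a + δr ≤ w + δr := by linarith
        rcases max_cases a (a + δr) with ⟨he, _⟩ | ⟨he, _⟩ <;> rw [he] at hs
        · exact le_trans hs.2 (le_trans hab (le_max_left _ _))
        · exact le_trans hs.2 (le_trans this (le_max_right _ _))


section CaseA
open Classical in
lemma caseA (mr dr mf df δr δf : ℝ) (hmr : 0 ≤ mr) (hmf : 0 ≤ mf)
    (hδr : 0 ≤ δr) (hδf : 0 ≤ δf)
    (hα : df ≤ mf + dr)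
    (hsum : δr + δf ≤ mr + mf)
    (hA : δf ≤ mr + df - dr)
    (u : ℝ → Bool) (hu : IsSignal u) :
    (SolBDC mr dr mf df u ∩ SolAIC δr δf).Nonempty := by
  obtain ⟨D, hPCu, hLFD⟩ := PC_of_isSignal hu
  set U : ℝ → Bool := fun s => supOn u (Set.Icc (s - df) (s - df + mf)) with hUdef
  set y : ℝ → Bool := fun t => infOn U (Set.Icc t (t + δf)) with hydef
  set x : ℝ → Bool := fun t =>
    decide (∃ a, a ≤ t ∧ ∀ s ∈ Set.Icc a (max t (a + δr)), y s = true) with hxdef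
  set DU : Set ℝ := ((fun p => p + df) '' D) ∪ ((fun p => p + (df - mf)) '' D) with hDUdef
  set E : Set ℝ := DU ∪ ((fun p => p + (-δf)) '' DU) with hEdef
  have hPCU : PC U DU := PC_sup_window hPCu df mf hmf
  have hPCy : PC y E := PC_inf_window hPCU δf hδf
  have hPCx : PC x E := PC_run hPCy δr
  have hLFE : LF E := by
    have h1 : LF DU := LF_union (LF_image_add hLFD df) (LF_image_add hLFD (df - mf))
    exact LF_union h1 (LF_image_add h1 (-δf))
  have hSigx : IsSignal x := isSignal_of_PC_LF hPCx hLFE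
  -- value-level characterizations
  have hxI : ∀ t, x t = true ↔
      ∃ a, a ≤ t ∧ ∀ s ∈ Set.Icc a (max t (a + δr)), y s = true := by
    intro t; rw [hxdef]; exact decide_eq_true_iff
  have hyI : ∀ t, y t = true ↔ ∀ s ∈ Set.Icc t (t + δf), U s = true := by
    intro t; rw [hydef]; exact infOn_eq_true
  have hUI : ∀ s, U s = true ↔ ∃ ξ ∈ Set.Icc (s - df) (s - df + mf), u ξ = true := by
    intro s; rw [hUdef]; exact supOn_eq_true
  have hUforce : ∀ t r : ℝ, (∀ ξ ∈ Set.Icc (t - dr) (t - dr + mr), u ξ = true) →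
      t - (mf + dr - df) ≤ r → r ≤ t + (mr + df - dr) → U r = true := by
    intro t r hwin h1 h2
    refine (hUI r).mpr ⟨max (t - dr) (r - df), ⟨?_, ?_⟩, ?_⟩
    · exact le_max_right _ _
    · refine max_le (by linarith) (by linarith)
    · refine hwin _ ⟨le_max_left _ _, max_le (by linarith) (by linarith)⟩
  have hxleft : ∀ a t : ℝ, a ≤ t →
      (∀ s ∈ Set.Icc a (max t (a + δr)), y s = true) →
      ∀ t', a ≤ t' → t' ≤ t → x t' = true := by
    intro a t hat hw t' h1 h2
    refine (hxI t').mpr ⟨a, h1, ?_⟩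
    intro s hs
    refine hw s ⟨hs.1, hs.2.trans (max_le_max h2 (le_refl _))⟩
  refine ⟨x, ⟨hSigx, fun t => ⟨?_, ?_⟩⟩, ⟨hSigx, fun t => ⟨?_, ?_⟩⟩⟩
  · -- BDC lower bound
    rw [bool_le_iff]
    intro hin
    have hwin := infOn_eq_true.mp hin
    refine (hxI t).mpr ⟨t - (mf + dr - df), by linarith, ?_⟩
    intro s hs
    refine (hyI s).mpr ?_
    intro r hr
    have hsmax : s ≤ max t (t - (mf + dr - df) + δr) := hs.2
    have hrub : r ≤ t + (mr + df - dr) := by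
      rcases max_cases t (t - (mf + dr - df) + δr) with ⟨he, _⟩ | ⟨he, _⟩ <;>
        rw [he] at hsmax <;> linarith [hr.2]
    exact hUforce t r hwin (by linarith [hr.1, hs.1]) hrub
  · -- BDC upper bound
    rw [bool_le_iff]
    intro hxt
    obtain ⟨a, ha, hw⟩ := (hxI t).mp hxt
    have hyt : y t = true := hw t ⟨ha, le_max_left _ _⟩
    have hUt : U t = true := (hyI t).mp hyt t ⟨le_refl _, by linarith⟩
    exact hUt
  · -- AIC rise
    rw [bool_le_iff]
    intro h
    rw [Bool.and_eq_true, Bool.not_eq_true'] at h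
    obtain ⟨hlv, hxt⟩ := h
    obtain ⟨a, ha, hw⟩ := (hxI t).mp hxt
    have hat : a = t := by
      rcases eq_or_lt_of_le ha with h' | h'
      · exact h'
      · exfalso
        have : leftVal x t = true := by
          rw [leftVal]
          rw [decide_eq_true_iff]
          refine ⟨t - a, by linarith, ?_⟩
          intro s hs
          have : t - (t - a) = a := by ring
          rw [this] at hs
          exact hxleft a t ha hw s (le_of_lt hs.1) (le_of_lt hs.2)
        rw [this] at hlv; exact Bool.noConfusion hlv
    subst hat
    refine infOn_eq_true.mpr ?_
    intro r hr
    refine (hxI r).mpr ⟨a, hr.1, ?_⟩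
    intro s hs
    refine hw s ⟨hs.1, hs.2.trans ?_⟩
    exact max_le (le_trans hr.2 (le_max_right _ _)) (le_max_right _ _)
  · -- AIC fall
    rw [bool_le_iff]
    intro h
    rw [Bool.and_eq_true, Bool.not_eq_true'] at h
    obtain ⟨hlv, hxt⟩ := h
    refine infOn_eq_true.mpr ?_
    intro r hr
    by_contra hxr'
    have hxr : x r = true := by
      cases hxv : x r with
      | false => exact absurd (by rw [hxv]; rfl) hxr'
      | true => rfl
    obtain ⟨ε, hε, hleft⟩ := decide_eq_true_iff.mp (by rw [leftVal] at hlv; exact hlv)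
    obtain ⟨w, hwr, hww⟩ := (hxI r).mp hxr
    have hwt : t < w := by
      by_contra hc
      push_neg at hc
      have : x t = true := hxleft w r hwr hww t hc hr.1
      rw [this] at hxt; exact Bool.noConfusion hxt
    -- y is true just to the left of t
    have hyleft : ∀ s, t - ε < s → s < t → y s = true := by
      intro s h1 h2
      have hxs : x s = true := hleft s ⟨h1, h2⟩
      obtain ⟨w', hw's, hw'⟩ := (hxI s).mp hxs
      exact hw' s ⟨hw's, le_max_left _ _⟩
    -- U is true on (t-ε, t+δf)
    have hUleft : ∀ s, t - ε < s → s < t + δf → U s = true := by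
      intro s h1 h2
      by_cases hc : s < t
      · exact (hyI s).mp (hyleft s h1 hc) s ⟨le_refl _, by linarith⟩
      · push_neg at hc
        set m := max (t - ε) (s - δf) with hm
        have hmlt : m < t := max_lt (by linarith) (by linarith)
        set q := (m + t) / 2 with hq
        have hq1 : m < q := by rw [hq]; linarith
        have hq2 : q < t := by rw [hq]; linarith
        have hyq : y q = true := hyleft q (lt_of_le_of_lt (le_max_left _ _) hq1) hq2
        refine (hyI q).mp hyq s ⟨by linarith, ?_⟩
        have : s - δf ≤ m := le_max_right _ _
        linarith
    have hyw : y w = true := hww w ⟨le_refl _, le_trans hwr (le_max_left _ _)⟩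
    have hwub : w ≤ t + δf := le_trans hwr hr.2
    -- U is true on (t-ε, w+δf]
    have hUmid : ∀ s, t - ε < s → s ≤ w + δf → U s = true := by
      intro s h1 h2
      by_cases hc : s < t + δf
      · exact hUleft s h1 hc
      · push_neg at hc
        exact (hyI w).mp hyw s ⟨by linarith, h2⟩
    -- y is true on (t-ε, w]
    have hymid : ∀ s, t - ε < s → s ≤ w → y s = true := by
      intro s h1 h2
      refine (hyI s).mpr ?_
      intro r' hr'
      exact hUmid r' (lt_of_lt_of_le h1 hr'.1) (by linarith [hr'.2])
    -- contradiction: x t should be true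
    have hxtt : x t = true := by
      refine (hxI t).mpr ⟨t - ε / 2, by linarith, ?_⟩
      intro s hs
      by_cases hc : s ≤ w
      · exact hymid s (by linarith [hs.1]) hc
      · push_neg at hc
        refine hww s ⟨le_of_lt hc, ?_⟩
        have hsub : s ≤ max t (t - ε / 2 + δr) := hs.2
        rcases max_cases t (t - ε / 2 + δr) with ⟨he, _⟩ | ⟨he, _⟩ <;> rw [he] at hsub
        · exact le_trans (le_trans hsub hr.1) (le_max_left _ _)
        · refine le_trans ?_ (le_max_right _ _)
          linarith
    rw [hxtt] at hxt; exact Bool.noConfusion hxt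
end CaseA


lemma isSignal_not {x : ℝ → Bool} (hx : IsSignal x) : IsSignal (fun t => !x t) := by
  obtain ⟨t, h1, h2, h3, h4⟩ := hx
  exact ⟨t, h1, h2, fun a ha b hb => congrArg Bool.not (h3 a ha b hb),
    fun k s hs => congrArg Bool.not (h4 k s hs)⟩

lemma exists_leftConst {x : ℝ → Bool} (hx : IsSignal x) (t : ℝ) :
    ∃ ε > 0, ∀ s ∈ Set.Ioo (t - ε) t, ∀ s' ∈ Set.Ioo (t - ε) t, x s = x s' := by
  classical
  obtain ⟨ts, hmono, htend, hiio, hico⟩ := hx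
  by_cases ht : t ≤ ts 0
  · refine ⟨1, one_pos, ?_⟩
    intro s hs s' hs'
    exact hiio s (lt_of_lt_of_le hs.2 ht) s' (lt_of_lt_of_le hs'.2 ht)
  · push_neg at ht
    have hEx : ∃ n, t ≤ ts n := by
      obtain ⟨n, hn⟩ := (htend.eventually_ge_atTop t).exists
      exact ⟨n, hn⟩
    obtain ⟨N, hNspec, hNmin⟩ : ∃ N, t ≤ ts N ∧ ∀ m, m < N → ¬ t ≤ ts m :=
      ⟨Nat.find hEx, Nat.find_spec hEx, fun m hm => Nat.find_min hEx hm⟩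
    have hNpos : N ≠ 0 := by
      intro h0; rw [h0] at hNspec; exact absurd hNspec (not_le.mpr ht)
    obtain ⟨K, rfl⟩ : ∃ K, N = K + 1 := ⟨N - 1, (Nat.succ_pred_eq_of_ne_zero hNpos).symm⟩
    have hK : ts K < t := not_le.mp (hNmin K (by omega))
    refine ⟨t - ts K, by linarith, ?_⟩
    have hconv : ∀ s ∈ Set.Ioo (t - (t - ts K)) t, x s = x (ts K) := by
      intro s hs
      have : t - (t - ts K) = ts K := by ring
      rw [this] at hs
      exact hico K s ⟨le_of_lt hs.1, lt_of_lt_of_le hs.2 hNspec⟩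
    intro s hs s' hs'
    rw [hconv s hs, hconv s' hs']

lemma leftVal_eq_of_const {x : ℝ → Bool} {t ε : ℝ} {c : Bool} (hε : 0 < ε)
    (h : ∀ s ∈ Set.Ioo (t - ε) t, x s = c) : leftVal x t = c := by
  cases c with
  | true =>
    exact (@decide_eq_true_iff _ (Classical.propDecidable _)).mpr ⟨ε, hε, h⟩
  | false =>
    refine decide_eq_false_iff_not.mpr ?_
    rintro ⟨ε', hε', h'⟩
    have hmem : t - min ε ε' / 2 ∈ Set.Ioo (t - ε) t := by
      constructor
      · have : min ε ε' ≤ ε := min_le_left _ _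
        have h2 : 0 < min ε ε' := lt_min hε hε'
        linarith
      · have h2 : 0 < min ε ε' := lt_min hε hε'
        linarith
    have hmem' : t - min ε ε' / 2 ∈ Set.Ioo (t - ε') t := by
      constructor
      · have : min ε ε' ≤ ε' := min_le_right _ _
        have h2 : 0 < min ε ε' := lt_min hε hε'
        linarith
      · have h2 : 0 < min ε ε' := lt_min hε hε'
        linarith
    have := h _ hmem
    have := h' _ hmem'
    simp_all

lemma leftVal_not {x : ℝ → Bool} (hx : IsSignal x) (t : ℝ) :
    leftVal (fun s => !x s) t = !leftVal x t := by
  obtain ⟨ε, hε, hc⟩ := exists_leftConst hx t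
  have hmem : t - ε / 2 ∈ Set.Ioo (t - ε) t := ⟨by linarith, by linarith⟩
  have h1 : ∀ s ∈ Set.Ioo (t - ε) t, x s = x (t - ε / 2) := fun s hs => hc s hs _ hmem
  have h2 : ∀ s ∈ Set.Ioo (t - ε) t, (!x s) = !(x (t - ε / 2)) :=
    fun s hs => by rw [h1 s hs]
  rw [leftVal_eq_of_const hε h1,
    leftVal_eq_of_const (x := fun s => !x s) (c := !(x (t - ε / 2))) hε h2]

lemma infOn_eq_false {u : ℝ → Bool} {A : Set ℝ} :
    infOn u A = false ↔ ¬ ∀ ξ ∈ A, u ξ = true := by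
  unfold infOn; exact decide_eq_false_iff_not

lemma supOn_eq_false {u : ℝ → Bool} {A : Set ℝ} :
    supOn u A = false ↔ ¬ ∃ ξ ∈ A, u ξ = true := by
  unfold supOn; exact decide_eq_false_iff_not

lemma infOn_not_eq {u : ℝ → Bool} {A : Set ℝ} :
    infOn (fun ξ => !u ξ) A = !supOn u A := by
  cases hs : supOn u A with
  | true =>
    obtain ⟨ξ, hξ, hξt⟩ := supOn_eq_true.mp hs
    refine infOn_eq_false.mpr ?_
    intro hall
    have := hall ξ hξ
    rw [hξt] at this
    exact Bool.noConfusion this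
  | false =>
    refine infOn_eq_true.mpr ?_
    intro ζ hζ
    cases hu : u ζ with
    | true =>
      have := supOn_eq_true.mpr ⟨ζ, hζ, hu⟩
      rw [hs] at this
      exact Bool.noConfusion this
    | false => rfl

lemma supOn_not_eq {u : ℝ → Bool} {A : Set ℝ} :
    supOn (fun ξ => !u ξ) A = !infOn u A := by
  cases hs : infOn u A with
  | true =>
    refine supOn_eq_false.mpr ?_
    rintro ⟨ξ, hξ, hξt⟩
    have := infOn_eq_true.mp hs ξ hξ
    rw [this] at hξt
    exact Bool.noConfusion hξt
  | false =>
    obtain ⟨ξ, hξ, hξt⟩ : ∃ ξ ∈ A, u ξ = false := by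
      by_contra hc
      push_neg at hc
      refine absurd (infOn_eq_true.mpr ?_) (by rw [hs]; exact Bool.noConfusion)
      intro ζ hζ
      cases hu : u ζ with
      | true => rfl
      | false => exact absurd hu (hc ζ hζ)
    refine supOn_eq_true.mpr ⟨ξ, hξ, ?_⟩
    rw [hξt]
    rfl

lemma bool_le_not_swap {a b : Bool} (h : a ≤ (!b)) : b ≤ (!a) := by
  rw [bool_le_iff] at h ⊢
  intro hb
  cases ha : a with
  | false => rfl
  | true =>
    rw [ha] at h
    have := h rfl
    simp [hb] at this
lemma bool_not_le_swap {a b : Bool} (h : (!a) ≤ b) : (!b) ≤ a := by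
  rw [bool_le_iff] at h ⊢
  intro hb
  cases ha : a with
  | true => rfl
  | false =>
    rw [ha] at h
    have hbt := h rfl
    rw [hbt] at hb
    simp at hb

lemma sol_not {mr dr mf df δr δf : ℝ} {u x : ℝ → Bool}
    (hx : x ∈ SolBDC mf df mr dr (fun t => !u t) ∩ SolAIC δf δr) :
    (fun t => !x t) ∈ SolBDC mr dr mf df u ∩ SolAIC δr δf := by
  obtain ⟨⟨hsig, hbdc⟩, ⟨-, haic⟩⟩ := hx
  refine ⟨⟨isSignal_not hsig, fun t => ?_⟩, ⟨isSignal_not hsig, fun t => ?_⟩⟩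
  · obtain ⟨h1, h2⟩ := hbdc t
    constructor
    · rw [supOn_not_eq] at h2
      exact bool_le_not_swap h2
    · rw [infOn_not_eq] at h1
      exact bool_not_le_swap h1
  · obtain ⟨c1, c2⟩ := haic t
    constructor
    · show ((!leftVal (fun s => !x s) t) && !x t) ≤ infOn (fun s => !x s) (Set.Icc t (t + δr))
      rw [leftVal_not hsig, Bool.not_not]
      exact c2
    · show ((leftVal (fun s => !x s) t) && !(!x t)) ≤ infOn (fun ξ => !(!x ξ)) (Set.Icc t (t + δf))
      rw [leftVal_not hsig, Bool.not_not]
      have hxx : (fun ξ => !(!x ξ)) = x := funext (fun ξ => Bool.not_not _)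
      rw [hxx]
      exact c1


lemma right_const {x : ℝ → Bool} (hx : IsSignal x) (p : ℝ) :
    ∃ η > 0, ∀ s ∈ Set.Ico p (p + η), x s = x p := by
  classical
  obtain ⟨ts, hmono, htend, hiio, hico⟩ := hx
  by_cases hp : p < ts 0
  · refine ⟨ts 0 - p, by linarith, ?_⟩
    intro s hs
    have : s < ts 0 := by have := hs.2; linarith
    exact hiio s this p hp
  · push_neg at hp
    have hEx : ∃ n, p < ts n := (htend.eventually_gt_atTop p).exists
    obtain ⟨N, hNspec, hNmin⟩ : ∃ N, p < ts N ∧ ∀ m, m < N → ¬ p < ts m :=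
      ⟨Nat.find hEx, Nat.find_spec hEx, fun m hm => Nat.find_min hEx hm⟩
    have hNpos : N ≠ 0 := by
      intro h0; rw [h0] at hNspec; exact absurd hNspec (not_lt.mpr hp)
    obtain ⟨K, rfl⟩ : ∃ K, N = K + 1 := ⟨N - 1, (Nat.succ_pred_eq_of_ne_zero hNpos).symm⟩
    have hK : ts K ≤ p := not_lt.mp (hNmin K (by omega))
    refine ⟨ts (K + 1) - p, by linarith, ?_⟩
    intro s hs
    have hs2 : s < ts (K + 1) := by have := hs.2; linarith
    rw [hico K s ⟨le_trans hK hs.1, hs2⟩, hico K p ⟨hK, hNspec⟩]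

lemma exists_switch {x : ℝ → Bool} (hx : IsSignal x) {v : Bool} {t1 t2 : ℝ}
    (h12 : t1 < t2) (h1 : x t1 = v) (h2 : x t2 ≠ v) :
    ∃ τ, t1 < τ ∧ τ ≤ t2 ∧ x τ ≠ v ∧ ∀ s, t1 ≤ s → s < τ → x s = v := by
  classical
  set S : Set ℝ := {s | (t1 < s ∧ s ≤ t2) ∧ x s ≠ v} with hS
  have hne : S.Nonempty := ⟨t2, ⟨h12, le_refl _⟩, h2⟩
  have hbdd : BddBelow S := ⟨t1, fun s hs => le_of_lt hs.1.1⟩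
  set τ := sInf S with hτ
  obtain ⟨η1, hη1, hc1⟩ := right_const hx t1
  have hlb : ∀ s ∈ S, t1 + min η1 (t2 - t1) ≤ s := by
    intro s hs
    by_contra hcon
    push_neg at hcon
    have hslt : s < t1 + η1 := lt_of_lt_of_le hcon (by
      have := min_le_left η1 (t2 - t1); linarith)
    have : x s = x t1 := hc1 s ⟨le_of_lt hs.1.1, hslt⟩
    rw [h1] at this
    exact hs.2 this
  have hτlb : t1 + min η1 (t2 - t1) ≤ τ := le_csInf hne hlb
  have hτpos : t1 < τ := by
    have h3 : 0 < min η1 (t2 - t1) := lt_min hη1 (by linarith)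
    linarith
  have hτle : τ ≤ t2 := csInf_le hbdd ⟨⟨h12, le_refl _⟩, h2⟩
  obtain ⟨η2, hη2, hc2⟩ := right_const hx τ
  have hxτ : x τ ≠ v := by
    obtain ⟨s, hsS, hsτ⟩ : ∃ s ∈ S, s < τ + η2 := by
      by_contra hcon
      push_neg at hcon
      have := le_csInf hne hcon
      linarith
    have hsge : τ ≤ s := csInf_le hbdd hsS
    have : x s = x τ := hc2 s ⟨hsge, hsτ⟩
    rw [← this]
    exact hsS.2
  refine ⟨τ, hτpos, hτle, hxτ, ?_⟩
  intro s hs1 hs2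
  rcases eq_or_lt_of_le hs1 with h' | h'
  · rw [← h']; exact h1
  · by_contra hcon
    have hsS : s ∈ S := ⟨⟨h', le_of_lt (lt_of_lt_of_le hs2 hτle)⟩, hcon⟩
    exact absurd (csInf_le hbdd hsS) (not_le.mpr hs2)

lemma bool_eq_true_of_le_true {b : Bool} (h : true ≤ b) : b = true := by
  cases b
  · exact absurd h (by simp)
  · rfl

lemma bool_eq_false_of_le_false {b : Bool} (h : b ≤ false) : b = false := by
  cases b
  · rfl
  · exact absurd h (by simp)

open Classical in
lemma forward_dir (mr dr mf df : ℝ) (hmr : 0 ≤ mr) (hmf : 0 ≤ mf)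
    (hcc1 : dr ≥ df - mf) (hcc2 : df ≥ dr - mr)
    (δr δf : ℝ) (hδr : 0 ≤ δr) (hδf : 0 ≤ δf)
    (H : ∀ u : ℝ → Bool, IsSignal u →
        (SolBDC mr dr mf df u ∩ SolAIC δr δf).Nonempty) :
    δr + δf ≤ mr + mf := by
  refine le_of_forall_pos_le_add ?_
  intro ε hε
  obtain ⟨q, p, hqdef, hpdef⟩ : ∃ q p : ℝ, q = mr + ε / 2 ∧ p = mr + mf + ε :=
    ⟨_, _, rfl, rfl⟩
  have hp : 0 < p := by linarith
  have hq : 0 < q := by linarith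
  have hqp : q < p := by linarith
  set u : ℝ → Bool := fun ξ => decide (0 ≤ ξ ∧ ξ - p * ⌊ξ / p⌋ < q) with hudef
  have hfloor : ∀ (k : ℕ) (ξ : ℝ), (k : ℝ) * p ≤ ξ → ξ < (k : ℝ) * p + p →
      ⌊ξ / p⌋ = (k : ℤ) := by
    intro k ξ hl hu'
    rw [Int.floor_eq_iff]
    constructor
    · push_cast
      rw [le_div_iff₀ hp]
      linarith
    · push_cast
      rw [div_lt_iff₀ hp]
      linarith
  have hutrue : ∀ (k : ℕ) (ξ : ℝ), (k : ℝ) * p ≤ ξ → ξ < (k : ℝ) * p + q → u ξ = true := by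
    intro k ξ hl hu'
    rw [hudef]
    refine decide_eq_true_iff.mpr ⟨?_, ?_⟩
    · have : (0:ℝ) ≤ (k : ℝ) * p := mul_nonneg (Nat.cast_nonneg k) hp.le
      linarith
    · rw [hfloor k ξ hl (by linarith)]
      push_cast
      linarith
  have hufalse : ∀ (k : ℕ) (ξ : ℝ), (k : ℝ) * p + q ≤ ξ → ξ < (k : ℝ) * p + p →
      u ξ = false := by
    intro k ξ hl hu'
    rw [hudef]
    refine decide_eq_false_iff_not.mpr ?_
    rintro ⟨-, hlt⟩
    rw [hfloor k ξ (by linarith) hu'] at hlt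
    push_cast at hlt
    linarith
  -- u is a signal
  have hSigu : IsSignal u := by
    have hmono1 : StrictMono (fun n : ℕ => (n : ℝ) * p) := by
      intro a b hab
      have : (a : ℝ) < (b : ℝ) := Nat.cast_lt.mpr hab
      exact mul_lt_mul_of_pos_right this hp
    have htend1 : Filter.Tendsto (fun n : ℕ => (n : ℝ) * p) Filter.atTop Filter.atTop :=
      Filter.Tendsto.atTop_mul_const hp tendsto_natCast_atTop_atTop
    have hmono2 : StrictMono (fun n : ℕ => (n : ℝ) * p + q) := fun a b hab => by
      have := hmono1 hab; simpa using add_lt_add_right this q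
    have htend2 : Filter.Tendsto (fun n : ℕ => (n : ℝ) * p + q) Filter.atTop Filter.atTop :=
      Filter.tendsto_atTop_add_const_right _ q htend1
    set D : Set ℝ := Set.range (fun n : ℕ => (n : ℝ) * p) ∪
      Set.range (fun n : ℕ => (n : ℝ) * p + q) with hDdef
    have hLFD : LF D := LF_union (LF_range hmono1 htend1) (LF_range hmono2 htend2)
    have hPCu : PC u D := by
      intro a b hab hpts
      by_cases hb0 : b < 0
      · have ha0 : a < 0 := lt_of_le_of_lt hab hb0
        rw [hudef]
        simp only [decide_eq_decide]
        constructor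
        · rintro ⟨h, -⟩; exact absurd h (not_le.mpr ha0)
        · rintro ⟨h, -⟩; exact absurd h (not_le.mpr hb0)
      · push_neg at hb0
        have ha0 : 0 ≤ a := by
          by_contra hc
          push_neg at hc
          refine hpts 0 (Or.inl ⟨0, by simp⟩) ⟨hc, hb0⟩
        have hk0 : (0:ℤ) ≤ ⌊a / p⌋ := Int.floor_nonneg.mpr (div_nonneg ha0 hp.le)
        set K : ℕ := ⌊a / p⌋.toNat with hKdef
        have hKcast : ((K : ℕ) : ℤ) = ⌊a / p⌋ := Int.toNat_of_nonneg hk0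
        have hKle : (K : ℝ) * p ≤ a := by
          have h1 : ((⌊a / p⌋ : ℤ) : ℝ) ≤ a / p := Int.floor_le _
          have h2 : ((K : ℕ) : ℝ) = ((⌊a / p⌋ : ℤ) : ℝ) := by exact_mod_cast hKcast
          rw [h2]
          calc ((⌊a / p⌋ : ℤ) : ℝ) * p ≤ (a / p) * p := by
                exact mul_le_mul_of_nonneg_right h1 hp.le
            _ = a := by field_simp
        have hKgt : a < (K : ℝ) * p + p := by
          have h1 : a / p < ((⌊a / p⌋ : ℤ) : ℝ) + 1 := Int.lt_floor_add_one _
          have h2 : ((K : ℕ) : ℝ) = ((⌊a / p⌋ : ℤ) : ℝ) := by exact_mod_cast hKcast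
          rw [h2]
          have := mul_lt_mul_of_pos_right h1 hp
          calc a = (a / p) * p := by field_simp
            _ < (((⌊a / p⌋ : ℤ) : ℝ) + 1) * p := mul_lt_mul_of_pos_right h1 hp
            _ = ((⌊a / p⌋ : ℤ) : ℝ) * p + p := by ring
        have hbK : b < (K : ℝ) * p + p := by
          by_contra hc
          push_neg at hc
          refine hpts (((K + 1 : ℕ) : ℝ) * p) (Or.inl ⟨K + 1, rfl⟩) ⟨?_, ?_⟩
          · push_cast; linarith
          · push_cast; linarith
        by_cases haq : a < (K : ℝ) * p + q
        · have hbq : b < (K : ℝ) * p + q := by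
            by_contra hc
            push_neg at hc
            exact hpts ((K : ℝ) * p + q) (Or.inr ⟨K, rfl⟩) ⟨haq, hc⟩
          rw [hutrue K a hKle haq, hutrue K b (le_trans hKle hab) hbq]
        · push_neg at haq
          rw [hufalse K a haq hKgt, hufalse K b (le_trans haq hab) hbK]
    exact isSignal_of_PC_LF hPCu hLFD
  obtain ⟨x, ⟨hsigx, hbdc⟩, ⟨-, haic⟩⟩ := H u hSigu
  -- forced true points
  have hT : ∀ k : ℕ, x ((k : ℝ) * p + dr) = true := by
    intro k
    have hin : infOn u (Set.Icc ((k : ℝ) * p + dr - dr) ((k : ℝ) * p + dr - dr + mr)) = true := by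
      refine infOn_eq_true.mpr ?_
      intro ξ hξ
      refine hutrue k ξ (by linarith [hξ.1]) ?_
      have h2 := hξ.2
      linarith
    have h := (hbdc ((k : ℝ) * p + dr)).1
    rw [hin] at h
    exact bool_eq_true_of_le_true h
  -- forced false points
  have hF : ∀ k : ℕ, x ((k : ℝ) * p + q + df) = false := by
    intro k
    have hsup : supOn u (Set.Icc ((k : ℝ) * p + q + df - df) ((k : ℝ) * p + q + df - df + mf))
        = false := by
      refine supOn_eq_false.mpr ?_
      rintro ⟨ξ, hξ, hξt⟩
      have h1 : (k : ℝ) * p + q ≤ ξ := by linarith [hξ.1]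
      have h2 : ξ < (k : ℝ) * p + p := by
        have := hξ.2
        linarith
      rw [hufalse k ξ h1 h2] at hξt
      exact Bool.noConfusion hξt
    have h := (hbdc ((k : ℝ) * p + q + df)).2
    rw [hsup] at h
    exact bool_eq_false_of_le_false h
  have hts : ∀ k : ℕ, (k : ℝ) * p + dr < (k : ℝ) * p + q + df := by
    intro k
    linarith
  have hst : ∀ k : ℕ, (k : ℝ) * p + q + df < ((k + 1 : ℕ) : ℝ) * p + dr := by
    intro k
    push_cast
    nlinarith [hqdef, hpdef]
  have hfall : ∀ k : ℕ, ∃ τ, ((k : ℝ) * p + dr < τ ∧ τ ≤ (k : ℝ) * p + q + df) ∧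
      x τ = false ∧ ∀ s, (k : ℝ) * p + dr ≤ s → s < τ → x s = true := by
    intro k
    obtain ⟨τ, h1, h2, h3, h4⟩ := exists_switch hsigx (hts k) (hT k)
      (by rw [hF k]; exact Bool.noConfusion)
    refine ⟨τ, ⟨h1, h2⟩, ?_, h4⟩
    cases hxv : x τ with
    | false => rfl
    | true => exact absurd hxv h3
  choose τf hbounds hfalse hleft using hfall
  have hgrow : ∀ k : ℕ, τf k + (δf + δr) < τf (k + 1) := by
    intro k
    -- AIC fall at τf k
    have hlv : leftVal x (τf k) = true := by
      refine leftVal_eq_of_const (ε := τf k - ((k : ℝ) * p + dr))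
        (by linarith [(hbounds k).1]) ?_
      intro s hs
      have e : τf k - (τf k - ((k : ℝ) * p + dr)) = (k : ℝ) * p + dr := by ring
      rw [e] at hs
      exact hleft k s (le_of_lt hs.1) hs.2
    have hfall_cond := (haic (τf k)).2
    rw [hlv, hfalse k] at hfall_cond
    have h' : infOn (fun ξ => !x ξ) (Set.Icc (τf k) (τf k + δf)) = true :=
      bool_eq_true_of_le_true (by simpa using hfall_cond)
    have hxf : ∀ s ∈ Set.Icc (τf k) (τf k + δf), x s = false := by
      intro s hs
      have := infOn_eq_true.mp h' s hs
      cases hxv : x s with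
      | false => rfl
      | true => rw [hxv] at this; exact absurd this (by simp)
    -- rise between τf k and the next forced-true point
    have hτk_lt : τf k < ((k + 1 : ℕ) : ℝ) * p + dr := lt_of_le_of_lt (hbounds k).2 (hst k)
    obtain ⟨σ, hσ1, hσ2, hσ3, hσ4⟩ := exists_switch hsigx hτk_lt (hfalse k)
      (by rw [hT (k + 1)]; exact Bool.noConfusion)
    have hσtrue : x σ = true := by
      cases hxv : x σ with
      | true => rfl
      | false => exact absurd hxv hσ3
    have hlvσ : leftVal x σ = false := by
      refine leftVal_eq_of_const (ε := σ - τf k) (by linarith) ?_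
      intro s hs
      have e : σ - (σ - τf k) = τf k := by ring
      rw [e] at hs
      exact hσ4 s (le_of_lt hs.1) hs.2
    have hσgt : τf k + δf < σ := by
      by_contra hc
      push_neg at hc
      have := hxf σ ⟨le_of_lt hσ1, hc⟩
      rw [this] at hσtrue
      exact Bool.noConfusion hσtrue
    have hrise := (haic σ).1
    rw [hlvσ, hσtrue] at hrise
    have h'' : infOn x (Set.Icc σ (σ + δr)) = true :=
      bool_eq_true_of_le_true (by simpa using hrise)
    have hfin : σ + δr < τf (k + 1) := by
      by_contra hc
      push_neg at hc
      have hmem : τf (k + 1) ∈ Set.Icc σ (σ + δr) :=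
        ⟨le_trans hσ2 (le_of_lt (hbounds (k + 1)).1), hc⟩
      have := infOn_eq_true.mp h'' _ hmem
      rw [hfalse (k + 1)] at this
      exact Bool.noConfusion this
    linarith
  have hacc : ∀ n : ℕ, τf 0 + (n : ℝ) * (δf + δr) ≤ τf n := by
    intro n
    induction n with
    | zero => simp
    | succ m ih =>
      have := hgrow m
      push_cast
      push_cast at ih
      linarith
  have hlb0 : dr < τf 0 := by
    have := (hbounds 0).1
    push_cast at this
    linarith
  have hple : δr + δf ≤ p := by
    by_contra hc
    push_neg at hc
    obtain ⟨d, hd⟩ : ∃ d : ℝ, d = δr + δf - p := ⟨_, rfl⟩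
    have hd0 : 0 < d := by linarith
    obtain ⟨n, hn⟩ := exists_nat_gt ((q + df - dr) / d)
    have h1 : τf 0 + (n : ℝ) * (δf + δr) ≤ (n : ℝ) * p + q + df :=
      le_trans (hacc n) (hbounds n).2
    have h3 : (n : ℝ) * d ≤ q + df - dr := by
      have e : (n : ℝ) * d = (n : ℝ) * (δf + δr) - (n : ℝ) * p := by rw [hd]; ring
      linarith
    rw [div_lt_iff₀ hd0] at hn
    linarith
  linarith


theorem bdc_aic_inter_nonempty_iff (mr dr mf df : ℝ)
    (hmr : 0 ≤ mr) (hmrdr : mr ≤ dr) (hmf : 0 ≤ mf) (hmfdf : mf ≤ df) (hcc1 : dr ≥ df - mf) (hcc2 : df ≥ dr - mr)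
    (δr δf : ℝ) (hδr : 0 ≤ δr) (hδf : 0 ≤ δf) :
    (∀ u : ℝ → Bool, IsSignal u →
        (SolBDC mr dr mf df u ∩ SolAIC δr δf).Nonempty) ↔
      δr + δf ≤ mr + mf := by
  constructor
  · intro H
    exact forward_dir mr dr mf df hmr hmf hcc1 hcc2 δr δf hδr hδf H
  · intro hle u hu
    rcases le_or_gt δf (mr + df - dr) with hcase | hcase
    · exact caseA mr dr mf df δr δf hmr hmf hδr hδf (by linarith) hle hcase u hu
    · have hcase' : δr ≤ mf + dr - df := by linarith
      obtain ⟨x, hx⟩ := caseA mf df mr dr δf δr hmf hmr hδf hδr (by linarith)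
        (by linarith) hcase' (fun t => !u t) (isSignal_not hu)
      exact ⟨_, sol_not hx⟩
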